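/- For every integer n ≥ 1 there exist real numbers q_1, q_2, …, q_n, pairwise distinct, with q_1 = 1 and q_k ∈ (0,1) for 2 ≤ k ≤ n, such that Σ_{k=1}^n p_k^(n)·z^k = Π_{k=1}^{n}(1 − q_k + q_k·z) for all real z. Equivalently, the vertex-number distribution (p_k^(n))_{k=1}^n is the distribution of 1 + B_2 + ⋯ + B_n for independent Bernoulli random variables B_k with success probabilities q_k. -/

import Mathlib

/-! Splitting off the last part of a composition gives
`n (n + 1) p n (k + 1) = 2 ∑_{m < n} (n - m) p m k`, and a second difference in `n` turns this
into the three-term recurrence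
`(m + 3) (m + 4) K_{m+2} = (2 z + 2 (m + 2) (m + 3)) K_{m+1} - (m + 1) (m + 2) K_m`
for `K_m(z) = G_{m+1}(z) / z`. At a root of `K_{m+1}` it gives `K_{m+2}` and `K_m` opposite
signs, so by induction the roots of consecutive `K_m` interlace and `K_m` has `m` distinct roots
`s_i`, all negative because `K_m(0) > 0`. As `K_m(1) = ∑ₖ p (m + 1) k = 1`, this gives
`G_{m+1}(z) = z ∏ᵢ (z - s_i) / (1 - s_i)`, and `(z - s_i) / (1 - s_i) = 1 - q_i + q_i z` with
`q_i = 1 / (1 - s_i) ∈ (0, 1)`. -/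

open Finset

/-- `p n k` is the probability `p_k^{(n)} = P(f_0(T_n) = k)` that the random convex chain
`T_n` has exactly `k` vertices (besides the two corners), given by Buchta's formula:
`p_k^{(n)} = 2^k · Σ_{i_1+⋯+i_k = n, i_j ≥ 1} Π_{j=1}^{k} i_j / (s_j (s_j + 1))`,
where `s_j = i_1 + ⋯ + i_j`.  In particular `p 0 0 = 1` and `p n 0 = 0` for `n ≥ 1`,
and `p n k = 0` for `k > n`. -/
noncomputable def p (n k : ℕ) : ℝ :=
  2 ^ k *
    ∑ i ∈ (Fintype.piFinset fun _ : Fin k => Finset.Icc 1 n).filter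
        (fun i => ∑ j, i j = n),
      ∏ j : Fin k,
        (i j : ℝ) /
          (((∑ l ∈ Finset.univ.filter (fun l => l ≤ j), i l : ℕ) : ℝ) *
            (((∑ l ∈ Finset.univ.filter (fun l => l ≤ j), i l : ℕ) : ℝ) + 1))

open Polynomial

namespace Polynomial

theorem C_leadingCoeff_mul_prod_X_sub_C {R ι : Type*} [CommRing R] [IsDomain R] [Fintype ι]
    {P : R[X]} (hdeg : P.natDegree = Fintype.card ι) {r : ι → R} (hr : Function.Injective r)
    (hroot : ∀ i, P.IsRoot (r i)) :
    C P.leadingCoeff * ∏ i, (X - C (r i)) = P := by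
  by_cases hP : P = 0
  · simp [hP]
  have hle : univ.val.map r ≤ P.roots :=
    (Multiset.le_iff_subset (univ.nodup.map hr)).2 fun x hx => by
      obtain ⟨i, -, rfl⟩ := Multiset.mem_map.1 hx
      exact (mem_roots hP).2 (hroot i)
  have hroots : P.roots = univ.val.map r :=
    (Multiset.eq_of_le_of_card_le hle (by simpa [hdeg] using card_roots' P)).symm
  conv_rhs => rw [← C_leadingCoeff_mul_prod_multiset_X_sub_C (p := P) (by simp [hroots, hdeg]),
    hroots]
  rw [Multiset.map_map]
  rfl

open Filter in
theorem eventually_atBot_neg_one_pow_mul_eval_pos {P : ℝ[X]} (hP : 0 < P.leadingCoeff) :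
    ∀ᶠ x in atBot, 0 < (-1) ^ P.natDegree * P.eval x := by
  refine ((Asymptotics.IsEquivalent.refl.mul P.isEquivalent_atBot_lead).eventually_pos ?_)
  filter_upwards [eventually_lt_atBot 0] with x hx
  have : 0 < (-x) ^ P.natDegree := pow_pos (neg_pos.2 hx) _
  calc (0 : ℝ) < P.leadingCoeff * (-x) ^ P.natDegree := mul_pos hP this
    _ = _ := by
      show _ = (-1) ^ P.natDegree * (P.leadingCoeff * x ^ P.natDegree)
      rw [neg_pow]; ring

theorem exists_mem_Ioo_isRoot_of_sign_change {P : ℝ[X]} {a b : ℝ} (hab : a < b) (k : ℕ)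
    (ha : 0 < (-1) ^ (k + 1) * P.eval a) (hb : 0 < (-1) ^ k * P.eval b) :
    ∃ t ∈ Set.Ioo a b, P.IsRoot t := by
  rcases neg_one_pow_eq_or ℝ k with h | h <;> rw [pow_succ, h] at ha <;> rw [h] at hb
  · obtain ⟨t, ht, hPt⟩ := intermediate_value_Ioo hab.le P.continuousOn (show (0 : ℝ) ∈ _ by
      constructor <;> linarith)
    exact ⟨t, ht, hPt⟩
  · obtain ⟨t, ht, hPt⟩ := intermediate_value_Ioo' hab.le P.continuousOn (show (0 : ℝ) ∈ _ by
      constructor <;> linarith)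
    exact ⟨t, ht, hPt⟩

end Polynomial

theorem neg_one_pow_card_mul_prod_sub_pos {ι : Type*} [Fintype ι] {r : ι → ℝ} {x : ℝ}
    (hx : ∀ i, r i ≠ x) : 0 < (-1) ^ #{i | x < r i} * ∏ i, (x - r i) := by
  rw [← prod_filter_mul_prod_filter_not univ (fun i => x < r i), ← mul_assoc, ← prod_const,
    ← prod_mul_distrib]
  refine mul_pos (prod_pos fun i hi => ?_) (prod_pos fun i hi => ?_)
  · linarith [(mem_filter.1 hi).2]
  · linarith [lt_of_le_of_ne (not_lt.1 (mem_filter.1 hi).2) (hx i)]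

def Interlaces {d : ℕ} (s : Fin (d + 1) → ℝ) (r : Fin d → ℝ) : Prop :=
  ∀ i, s i.castSucc < r i ∧ r i < s i.succ

namespace Interlaces

variable {d : ℕ} {r : Fin d → ℝ} {s : Fin (d + 1) → ℝ}

theorem strictMono (h : Interlaces s r) : StrictMono s :=
  Fin.strictMono_iff_lt_succ.2 fun i => (h i).1.trans (h i).2

theorem lt_of_le_castSucc (h : Interlaces s r) {i : Fin d} {j : Fin (d + 1)}
    (hij : j ≤ i.castSucc) : s j < r i :=
  (h.strictMono.monotone hij).trans_lt (h i).1

theorem lt_of_castSucc_lt (h : Interlaces s r) {i : Fin d} {j : Fin (d + 1)}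
    (hij : i.castSucc < j) : r i < s j :=
  (h i).2.trans_le (h.strictMono.monotone (Fin.castSucc_lt_iff_succ_le.1 hij))

theorem card_filter_lt (h : Interlaces s r) (j : Fin (d + 1)) : #{i | s j < r i} = d - j := by
  have hfilter : ({i | s j < r i} : Finset (Fin d)) = univ.filter fun i : Fin d => ¬i.val < j := by
    ext i
    simp only [mem_filter, mem_univ, true_and, not_lt]
    refine ⟨fun hi => ?_, fun hi => h.lt_of_le_castSucc (Fin.le_def.2 hi)⟩
    by_contra hlt
    exact (h.lt_of_castSucc_lt (Fin.lt_def.2 (not_le.1 hlt))).not_gt hi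
  have := card_filter_add_card_filter_not (s := univ) (fun i : Fin d => (i : ℕ) < j)
  rw [hfilter]
  simp only [Fin.card_filter_val_lt, card_univ, Fintype.card_fin] at this
  omega

theorem neg_one_pow_mul_eval_pos (h : Interlaces s r) {P : ℝ[X]} (hdeg : P.natDegree = d)
    (hlc : 0 < P.leadingCoeff) (hr : Function.Injective r) (hroot : ∀ i, P.IsRoot (r i))
    (j : Fin (d + 1)) : 0 < (-1) ^ (d - j : ℕ) * P.eval (s j) := by
  have hne : ∀ i, r i ≠ s j := fun i => by
    rcases le_or_gt j i.castSucc with hij | hij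
    · exact (h.lt_of_le_castSucc hij).ne'
    · exact (h.lt_of_castSucc_lt hij).ne
  rw [← C_leadingCoeff_mul_prod_X_sub_C (hdeg.trans (Fintype.card_fin d).symm) hr hroot,
    ← h.card_filter_lt j]
  simp only [eval_mul, eval_C, eval_prod, eval_sub, eval_X]
  rw [mul_left_comm]
  exact mul_pos hlc (neg_one_pow_card_mul_prod_sub_pos hne)

end Interlaces

open Filter in
/-- The roots are found by the intermediate value theorem between consecutive points of
`w < r 0 < ⋯ < r (d - 1) < b`, where `Q` alternates in sign; `w` is taken far enough to the left. -/
theorem exists_interlaces_roots {d : ℕ} {r : Fin d → ℝ} {Q : ℝ[X]} {b : ℝ}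
    (hdeg : Q.natDegree = d + 1) (hlc : 0 < Q.leadingCoeff) (hb : 0 < Q.eval b)
    (hmono : StrictMono r) (hr : ∀ i, r i < b)
    (hsign : ∀ i : Fin d, 0 < (-1) ^ (d - i : ℕ) * Q.eval (r i)) :
    ∃ s : Fin (d + 1) → ℝ, (∀ j, s j < b) ∧ (∀ j, Q.IsRoot (s j)) ∧ Interlaces s r := by
  obtain ⟨w, hw, hwr, hwb⟩ : ∃ w, 0 < (-1) ^ (d + 1) * Q.eval w ∧ (∀ i, w < r i) ∧ w < b := by
    have := (eventually_atBot_neg_one_pow_mul_eval_pos hlc).and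
      ((eventually_all.2 fun i => eventually_lt_atBot (r i)).and (eventually_lt_atBot b))
    rw [hdeg] at this
    exact this.exists
  obtain ⟨left, hleft_zero, hleft_succ⟩ :
      ∃ left : Fin (d + 1) → ℝ, left 0 = w ∧ ∀ i, left i.succ = r i :=
    ⟨Fin.cons w r, rfl, fun _ => rfl⟩
  obtain ⟨right, hright_last, hright_castSucc⟩ :
      ∃ right : Fin (d + 1) → ℝ, right (Fin.last d) = b ∧ ∀ i, right i.castSucc = r i :=
    ⟨Fin.snoc r b, Fin.snoc_last _ _, Fin.snoc_castSucc _ _⟩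
  have hleft : ∀ j : Fin (d + 1), 0 < (-1) ^ (d - j + 1 : ℕ) * Q.eval (left j) := by
    refine Fin.cases (by simpa [hleft_zero] using hw) fun i => ?_
    rw [hleft_succ, Fin.val_succ, show d - (i + 1) + 1 = d - i by omega]
    exact hsign i
  have hright : ∀ j : Fin (d + 1), 0 < (-1) ^ (d - j : ℕ) * Q.eval (right j) := by
    refine Fin.lastCases (by simpa [hright_last] using hb) fun i => ?_
    rw [hright_castSucc, Fin.val_castSucc]
    exact hsign i
  have hright_le : ∀ j, right j ≤ b :=
    Fin.lastCases hright_last.le fun i => hright_castSucc i ▸ (hr i).le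
  have hw_lt : ∀ j, w < right j :=
    Fin.lastCases (hright_last ▸ hwb) fun i => hright_castSucc i ▸ hwr i
  have hr_lt : ∀ (i : Fin d) j, i.castSucc < j → r i < right j := fun i =>
    Fin.lastCases (fun _ => hright_last ▸ hr i) fun j h =>
      hright_castSucc j ▸ hmono (Fin.castSucc_lt_castSucc_iff.1 h)
  have hlr : ∀ j, left j < right j :=
    Fin.cases (hleft_zero ▸ hw_lt 0) fun i => hleft_succ i ▸ hr_lt i _ Fin.castSucc_lt_succ
  choose s hs hroot using fun j =>
    exists_mem_Ioo_isRoot_of_sign_change (hlr j) (d - j) (hleft j) (hright j)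
  refine ⟨s, fun j => (hs j).2.trans_le (hright_le j), hroot, fun i => ⟨?_, ?_⟩⟩
  · exact hright_castSucc i ▸ (hs i.castSucc).2
  · exact hleft_succ i ▸ (hs i.succ).1

theorem exists_strictMono_roots_of_three_term {P : ℕ → ℝ[X]} {α β γ δ : ℕ → ℝ} {b : ℝ}
    (hα : ∀ m, 0 < α m) (hδ : ∀ m, 0 < δ m)
    (hrec : ∀ m, C (α m) * P (m + 2) = (C (β m) * X + C (γ m)) * P (m + 1) - C (δ m) * P m)
    (hdeg : ∀ m, (P m).natDegree = m) (hlc : ∀ m, 0 < (P m).leadingCoeff)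
    (hb : ∀ m, 0 < (P m).eval b) (m : ℕ) :
    ∃ r : Fin m → ℝ, StrictMono r ∧ (∀ i, r i < b) ∧ ∀ i, (P m).IsRoot (r i) := by
  -- the roots of `P (m + 1)` interlace those of `P m`, so `P (m + 1)` alternates in sign on them
  suffices ∀ m, ∃ r : Fin m → ℝ, StrictMono r ∧ (∀ i, r i < b) ∧ (∀ i, (P m).IsRoot (r i)) ∧
      ∀ i : Fin m, 0 < (-1) ^ (m - i : ℕ) * (P (m + 1)).eval (r i) by
    obtain ⟨r, hr⟩ := this m
    exact ⟨r, hr.1, hr.2.1, hr.2.2.1⟩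
  intro m
  induction m with
  | zero => exact ⟨finZeroElim, fun i => i.elim0, fun i => i.elim0, fun i => i.elim0,
      fun i => i.elim0⟩
  | succ m ih =>
    obtain ⟨r, hr_mono, hr_lt, hr_root, hr_sign⟩ := ih
    obtain ⟨s, hs_lt, hs_root, hsr⟩ :=
      exists_interlaces_roots (hdeg (m + 1)) (hlc (m + 1)) (hb (m + 1)) hr_mono hr_lt hr_sign
    refine ⟨s, hsr.strictMono, hs_lt, hs_root, fun j => ?_⟩
    have hsign := hsr.neg_one_pow_mul_eval_pos (hdeg m) (hlc m) hr_mono.injective hr_root j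
    have hrec_j := congrArg (eval (s j)) (hrec m)
    simp only [eval_mul, eval_C, eval_sub, eval_add, eval_X, (hs_root j).eq_zero] at hrec_j
    have key : α m * ((-1) ^ (m + 1 - j : ℕ) * (P (m + 2)).eval (s j))
        = δ m * ((-1) ^ (m - j : ℕ) * (P m).eval (s j)) := by
      rw [show m + 1 - j = m - j + 1 by omega, pow_succ]
      linear_combination (-(-1) ^ (m - j : ℕ)) * hrec_j
    exact pos_of_mul_pos_right (key ▸ mul_pos (hδ m) hsign) (hα m).le

theorem eval_eq_prod_of_eval_one {ι : Type*} [Fintype ι] {P : ℝ[X]}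
    (hdeg : P.natDegree = Fintype.card ι) {s : ι → ℝ} (hs : Function.Injective s)
    (hroot : ∀ i, P.IsRoot (s i)) (hs1 : ∀ i, s i ≠ 1) (h1 : P.eval 1 = 1) (z : ℝ) :
    P.eval z = ∏ i, (1 - (1 - s i)⁻¹ + (1 - s i)⁻¹ * z) := by
  have hP : ∀ x, P.eval x = P.leadingCoeff * ∏ i, (x - s i) := fun x => by
    conv_lhs => rw [← C_leadingCoeff_mul_prod_X_sub_C hdeg hs hroot]
    simp [eval_prod]
  have hs1' : ∀ i, 1 - s i ≠ 0 := fun i => sub_ne_zero.2 (hs1 i).symm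
  have hfactor : ∀ i, 1 - (1 - s i)⁻¹ + (1 - s i)⁻¹ * z = (z - s i) / (1 - s i) := fun i => by
    field_simp [hs1' i]
    ring
  rw [hP] at h1 ⊢
  rw [prod_congr rfl fun i _ => hfactor i, prod_div_distrib, eq_div_iff (prod_ne_zero_iff.2
    fun i _ => hs1' i), mul_right_comm, h1, one_mul]

def compositions (n k : ℕ) : Finset (Fin k → ℕ) :=
  (Fintype.piFinset fun _ : Fin k => Finset.Icc 1 n).filter (fun i => ∑ j, i j = n)

def partialSum {k : ℕ} (i : Fin k → ℕ) (j : Fin k) : ℕ :=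
  ∑ l ∈ Finset.univ.filter (fun l => l ≤ j), i l

noncomputable def weight {k : ℕ} (i : Fin k → ℕ) : ℝ :=
  ∏ j, (i j : ℝ) / ((partialSum i j : ℝ) * ((partialSum i j : ℝ) + 1))

theorem p_eq_sum_weight (n k : ℕ) : p n k = 2 ^ k * ∑ i ∈ compositions n k, weight i := rfl

theorem mem_compositions {n k : ℕ} {i : Fin k → ℕ} :
    i ∈ compositions n k ↔ (∀ j, 1 ≤ i j) ∧ ∑ j, i j = n := by
  simp only [compositions, mem_filter, Fintype.mem_piFinset, mem_Icc]
  refine ⟨fun h => ⟨fun j => (h.1 j).1, h.2⟩, fun h => ⟨fun j => ⟨h.1 j, ?_⟩, h.2⟩⟩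
  exact h.2 ▸ single_le_sum (fun _ _ => Nat.zero_le _) (mem_univ j)

theorem partialSum_snoc_castSucc {k : ℕ} (i : Fin k → ℕ) (c : ℕ) (j : Fin k) :
    partialSum (Fin.snoc i c : Fin (k + 1) → ℕ) j.castSucc = partialSum i j := by
  have : univ.filter (fun l : Fin (k + 1) => l ≤ j.castSucc)
      = (univ.filter (fun l : Fin k => l ≤ j)).map Fin.castSuccEmb := by
    ext l
    simp only [mem_filter, mem_univ, true_and, mem_map]
    refine ⟨fun hl => ⟨⟨l, lt_of_le_of_lt hl j.isLt⟩, hl, rfl⟩, ?_⟩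
    rintro ⟨l, hl, rfl⟩
    exact hl
  rw [partialSum, partialSum, this, sum_map]
  simp only [Fin.coe_castSuccEmb, Fin.snoc_castSucc]

theorem partialSum_last {k : ℕ} (i : Fin (k + 1) → ℕ) : partialSum i (Fin.last k) = ∑ j, i j := by
  simp [partialSum, Fin.le_last]

theorem weight_snoc {k : ℕ} (i : Fin k → ℕ) (c : ℕ) :
    weight (Fin.snoc i c : Fin (k + 1) → ℕ)
      = weight i * c / (((∑ j, i j) + c : ℕ) * (((∑ j, i j) + c : ℕ) + 1)) := by
  rw [weight, Fin.prod_univ_castSucc, partialSum_last, Fin.sum_snoc]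
  simp [partialSum_snoc_castSucc, weight, mul_div_assoc]

theorem sum_compositions_succ {M : Type*} [AddCommMonoid M] (n k : ℕ)
    (f : (Fin (k + 1) → ℕ) → M) :
    ∑ i ∈ compositions n (k + 1), f i
      = ∑ m ∈ range n, ∑ i ∈ compositions m k, f (Fin.snoc i (n - m)) := by
  rw [sum_sigma']
  symm
  refine sum_nbij' (fun x => Fin.snoc x.2 (n - x.1)) (fun i => ⟨∑ j, Fin.init i j, Fin.init i⟩)
    ?_ ?_ ?_ ?_ (fun _ _ => rfl)
  · rintro ⟨m, i⟩ hi
    simp only [mem_sigma, mem_range, mem_compositions] at hi ⊢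
    refine ⟨Fin.lastCases (by rw [Fin.snoc_last]; omega) (fun j => by simpa using hi.2.1 j), ?_⟩
    rw [Fin.sum_snoc, hi.2.2]
    omega
  · intro i hi
    simp only [mem_compositions, mem_sigma, mem_range] at hi ⊢
    have hlast := hi.1 (Fin.last k)
    rw [Fin.sum_univ_castSucc] at hi
    exact ⟨by simp only [Fin.init]; omega, fun j => hi.1 _, trivial⟩
  · rintro ⟨m, i⟩ hi
    simp only [mem_sigma, mem_compositions] at hi
    simp [hi.2.2]
  · intro i hi
    rw [mem_compositions, Fin.sum_univ_castSucc] at hi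
    simp only [Fin.init]
    rw [show n - ∑ j : Fin k, i j.castSucc = i (Fin.last k) by omega]
    exact Fin.snoc_init_self i

theorem p_succ (n k : ℕ) :
    (n * (n + 1) : ℝ) * p n (k + 1) = 2 * ∑ m ∈ range n, (n - m : ℝ) * p m k := by
  simp only [p_eq_sum_weight, sum_compositions_succ, mul_sum]
  refine sum_congr rfl fun m hm => sum_congr rfl fun i hi => ?_
  have hmn : m < n := mem_range.1 hm
  rw [weight_snoc, (mem_compositions.1 hi).2, Nat.add_sub_cancel' hmn.le, Nat.cast_sub hmn.le]
  have : (n : ℝ) ≠ 0 := Nat.cast_ne_zero.2 (by omega)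
  field_simp
  ring

theorem p_eq_zero_of_lt {n k : ℕ} (h : n < k) : p n k = 0 := by
  rw [p_eq_sum_weight, sum_eq_zero, mul_zero]
  intro i hi
  rw [mem_compositions] at hi
  have : ∑ _j : Fin k, 1 ≤ ∑ j, i j := sum_le_sum fun j _ => hi.1 j
  simp only [sum_const, card_univ, Fintype.card_fin, smul_eq_mul, mul_one] at this
  omega

theorem p_zero_zero : p 0 0 = 1 := by
  simp [p_eq_sum_weight, compositions, weight]

theorem p_succ_zero (n : ℕ) : p (n + 1) 0 = 0 := by
  simp [p_eq_sum_weight, compositions]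

theorem sum_range_sub_mul_add_two (a : ℕ → ℝ) (n : ℕ) :
    ∑ m ∈ range (n + 2), ((n + 2 : ℕ) - m : ℝ) * a m
      = 2 * ∑ m ∈ range (n + 1), ((n + 1 : ℕ) - m : ℝ) * a m
        - ∑ m ∈ range n, (n - m : ℝ) * a m + a (n + 1) := by
  have h : ∑ m ∈ range n, ((n + 2 : ℕ) - m : ℝ) * a m
      = 2 * ∑ m ∈ range n, ((n + 1 : ℕ) - m : ℝ) * a m - ∑ m ∈ range n, (n - m : ℝ) * a m := by
    rw [mul_sum, ← sum_sub_distrib]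
    exact sum_congr rfl fun m _ => by push_cast; ring
  simp only [sum_range_succ, h]
  push_cast
  ring

theorem p_three_term (n k : ℕ) :
    ((n + 2) * (n + 3) : ℝ) * p (n + 2) (k + 1)
      = 2 * p (n + 1) k + (2 * (n + 1) * (n + 2) : ℝ) * p (n + 1) (k + 1)
        - (n * (n + 1) : ℝ) * p n (k + 1) := by
  have h2 := p_succ (n + 2) k
  have h1 := p_succ (n + 1) k
  have h0 := p_succ n k
  rw [sum_range_sub_mul_add_two] at h2
  push_cast at h2 h1
  linear_combination h2 - 2 * h1 + h0

theorem p_succ_one (n : ℕ) : p (n + 1) 1 = 2 / (n + 2) := by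
  have h := p_succ (n + 1) 0
  rw [sum_range_succ', sum_eq_zero fun m _ => by rw [p_succ_zero, mul_zero], p_zero_zero] at h
  push_cast at h
  rw [eq_div_iff (by positivity)]
  apply mul_left_cancel₀ (show (n + 1 : ℝ) ≠ 0 by positivity)
  linear_combination h

theorem p_succ_self (n : ℕ) : p (n + 1) (n + 1) = 2 * p n n / ((n + 1) * (n + 2)) := by
  have h := p_succ (n + 1) n
  rw [sum_range_succ,
    sum_eq_zero fun m hm => by rw [p_eq_zero_of_lt (mem_range.1 hm), mul_zero]] at h
  push_cast at h
  field_simp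
  linarith

theorem p_self_pos (n : ℕ) : 0 < p n n := by
  induction n with
  | zero => simp [p_zero_zero]
  | succ n ih => rw [p_succ_self]; positivity

/-- `K_m(z) = G_{m+1}(z) / z`, with `G_n(z) = ∑ₖ p n k zᵏ`. -/
noncomputable def pgfDivX (m : ℕ) : ℝ[X] := ∑ k ∈ range (m + 1), C (p (m + 1) (k + 1)) * X ^ k

theorem coeff_pgfDivX (m k : ℕ) : (pgfDivX m).coeff k = p (m + 1) (k + 1) := by
  simp only [pgfDivX, finsetSum_coeff, coeff_C_mul_X_pow, sum_ite_eq, mem_range]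
  split_ifs with h
  · rfl
  · exact (p_eq_zero_of_lt (by omega)).symm

theorem natDegree_pgfDivX (m : ℕ) : (pgfDivX m).natDegree = m :=
  natDegree_eq_of_le_of_coeff_ne_zero
    (natDegree_le_iff_coeff_eq_zero.2 fun k hk => by
      rw [coeff_pgfDivX, p_eq_zero_of_lt (by exact_mod_cast Nat.succ_lt_succ hk)])
    (by rw [coeff_pgfDivX]; exact (p_self_pos _).ne')

theorem leadingCoeff_pgfDivX_pos (m : ℕ) : 0 < (pgfDivX m).leadingCoeff := by
  rw [leadingCoeff, natDegree_pgfDivX, coeff_pgfDivX]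
  exact p_self_pos _

theorem eval_zero_pgfDivX_pos (m : ℕ) : 0 < (pgfDivX m).eval 0 := by
  rw [← coeff_zero_eq_eval_zero, coeff_pgfDivX, p_succ_one]
  positivity

theorem pgfDivX_three_term (m : ℕ) :
    C (((m + 3) * (m + 4) : ℝ)) * pgfDivX (m + 2)
      = (C 2 * X + C ((2 * (m + 2) * (m + 3) : ℝ))) * pgfDivX (m + 1)
        - C (((m + 1) * (m + 2) : ℝ)) * pgfDivX m := by
  ext k
  have h := p_three_term (m + 1) k
  push_cast at h
  have hX : (X * pgfDivX (m + 1)).coeff k = p (m + 2) k := by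
    cases k with
    | zero => rw [coeff_X_mul_zero, p_succ_zero]
    | succ k => rw [coeff_X_mul, coeff_pgfDivX]
  simp only [coeff_sub, coeff_C_mul, add_mul, coeff_add, mul_assoc, hX, coeff_pgfDivX]
  linear_combination h

theorem X_mul_eval_pgfDivX (m : ℕ) (z : ℝ) :
    z * (pgfDivX m).eval z = ∑ k ∈ Icc 1 (m + 1), p (m + 1) k * z ^ k := by
  rw [pgfDivX, eval_finsetSum, mul_sum, ← Ico_add_one_right_eq_Icc, sum_Ico_eq_sum_range,
    Nat.add_sub_cancel]
  refine sum_congr rfl fun k _ => ?_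
  simp only [eval_mul, eval_C, eval_pow, eval_X, add_comm 1 k, pow_succ]
  ring

theorem eval_one_pgfDivX (m : ℕ) : (pgfDivX m).eval 1 = 1 := by
  induction m using Nat.strong_induction_on with
  | _ m ih =>
    match m with
    | 0 => simp [pgfDivX, p_succ_self, p_zero_zero]
    | 1 => norm_num [pgfDivX, sum_range_succ, p_succ_one, p_succ_self, p_zero_zero]
    | m + 2 =>
      have h := congrArg (eval 1) (pgfDivX_three_term m)
      simp only [eval_mul, eval_C, eval_sub, eval_add, eval_X, ih m (by omega),
        ih (m + 1) (by omega)] at h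
      have : ((m + 3) * (m + 4) : ℝ) ≠ 0 := by positivity
      exact mul_left_cancel₀ this (by linear_combination h)

/-- Corollary (representation as a sum of independent Bernoulli random variables):
for every `n ≥ 1` there are pairwise distinct reals `q_1, …, q_n` with `q_1 = 1` and
`q_k ∈ (0,1)` for `2 ≤ k ≤ n` such that
`Σ_{k=1}^n p_k^{(n)} z^k = Π_{k=1}^{n} (1 − q_k + q_k z)` for all real `z`;
i.e. the vertex-number distribution is that of `1 + B_2 + ⋯ + B_n` with independent
Bernoulli `B_k` of success probability `q_k`. -/
theorem p_bernoulli_decomposition (n : ℕ) (hn : 1 ≤ n) :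
    ∃ q : Fin n → ℝ, Function.Injective q ∧ q ⟨0, hn⟩ = 1 ∧
      (∀ k : Fin n, k ≠ ⟨0, hn⟩ → q k ∈ Set.Ioo (0 : ℝ) 1) ∧
      ∀ z : ℝ, ∑ k ∈ Finset.Icc 1 n, p n k * z ^ k = ∏ k : Fin n, (1 - q k + q k * z) := by
  obtain ⟨m, rfl⟩ := Nat.exists_eq_add_of_le' hn
  obtain ⟨s, hs_mono, hs_neg, hs_root⟩ := exists_strictMono_roots_of_three_term
    (fun _ => by positivity) (fun _ => by positivity) pgfDivX_three_term natDegree_pgfDivX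
    leadingCoeff_pgfDivX_pos eval_zero_pgfDivX_pos m
  have hq : ∀ i, (1 - s i)⁻¹ ∈ Set.Ioo (0 : ℝ) 1 := fun i =>
    ⟨inv_pos.2 (by linarith [hs_neg i]), inv_lt_one_of_one_lt₀ (by linarith [hs_neg i])⟩
  refine ⟨Fin.cons 1 fun i => (1 - s i)⁻¹, ?_, rfl, ?_, fun z => ?_⟩
  · refine Fin.cons_injective_iff.2 ⟨fun ⟨i, hi⟩ => (hq i).2.ne hi, fun i j h => ?_⟩
    exact hs_mono.injective (by simpa using h)
  · exact Fin.cases (fun h => absurd rfl h) fun i _ => hq i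
  · rw [← X_mul_eval_pgfDivX, Fin.prod_univ_succ, eval_eq_prod_of_eval_one
      ((natDegree_pgfDivX m).trans (Fintype.card_fin m).symm) hs_mono.injective hs_root
      (fun i => ((hs_neg i).trans zero_lt_one).ne) (eval_one_pgfDivX m) z]
    simp
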